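/- arXiv:1808.06175 — 2 statements merged into one kernel-verified Lean document; each statement's English description precedes it below -/
import Mathlib

section
/- Under the probabilistic sharing model, the blocking probability B1(x1,x2) of provider 1 is strictly decreasing in x2 on (0,1): its partial derivative with respect to x2 is strictly negative. -/
/-!
Write `B1 = P(x2) / Q(x2)` with `P = ∑ p_k x2^k`, `Q = ∑ q_k x2^k` of degree `N2` and `q_k > 0`.
For `k ≥ 1` the definitions give `p_k / q_k = 1 - (N1 + k) / a1`, while a comparison of truncated
exponential series gives `p_0 / q_0 ≥ 1 - N1 / a1`; so `p_k / q_k` is strictly decreasing in `k`.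
For such a pair, `x (P' Q - P Q') = ∑_{j,k} (j - k) p_j q_k x^(j+k)`, and pairing the `(j, k)` and
`(k, j)` terms turns this into `½ ∑_{j,k} (j - k) (p_j q_k - p_k q_j) x^(j+k) < 0`.
-/

open Finset

noncomputable def coefM1 (N1 N2 : ℕ) (a1 a2 : ℝ) : ℝ :=
  a1 ^ N1 / (Nat.factorial N1 : ℝ) * ∑ j ∈ Finset.range (N2 + 1), a2 ^ j / (Nat.factorial j : ℝ)

noncomputable def coefU1 (N1 N2 : ℕ) (a1 a2 : ℝ) (i : ℕ) : ℝ :=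
  a1 ^ (N1 - i) / (Nat.factorial (N1 - i) : ℝ) * (a2 ^ (N2 + i) / (Nat.factorial (N2 + i) : ℝ))

noncomputable def coefV1 (N1 N2 : ℕ) (a1 a2 : ℝ) (j : ℕ) : ℝ :=
  (1 - ((N1 : ℝ) + j) / a1) * (a1 ^ (N1 + j) / (Nat.factorial (N1 + j) : ℝ)) *
    ∑ i ∈ Finset.range (N2 - j + 1), a2 ^ i / (Nat.factorial i : ℝ)

noncomputable def coefD (N1 N2 : ℕ) (a1 a2 : ℝ) : ℝ :=
  (∑ i ∈ Finset.range (N1 + 1), a1 ^ i / (Nat.factorial i : ℝ)) *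
    ∑ j ∈ Finset.range (N2 + 1), a2 ^ j / (Nat.factorial j : ℝ)

noncomputable def coefU (N1 N2 : ℕ) (a1 a2 : ℝ) (i : ℕ) : ℝ :=
  (a2 ^ (N2 + i) / (Nat.factorial (N2 + i) : ℝ)) *
    ∑ j ∈ Finset.range (N1 - i + 1), a1 ^ j / (Nat.factorial j : ℝ)

noncomputable def coefV (N1 N2 : ℕ) (a1 a2 : ℝ) (j : ℕ) : ℝ :=
  (a1 ^ (N1 + j) / (Nat.factorial (N1 + j) : ℝ)) *
    ∑ i ∈ Finset.range (N2 - j + 1), a2 ^ i / (Nat.factorial i : ℝ)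

/-- Blocking probability of provider 1 under the probabilistic sharing model,
as a rational function of the sharing parameters `(x1, x2)`. -/
noncomputable def psB1 (N1 N2 : ℕ) (a1 a2 x1 x2 : ℝ) : ℝ :=
  (coefM1 N1 N2 a1 a2 + (∑ i ∈ Finset.Icc 1 N1, coefU1 N1 N2 a1 a2 i * x1 ^ i) +
      ∑ j ∈ Finset.Icc 1 N2, coefV1 N1 N2 a1 a2 j * x2 ^ j) /
    (coefD N1 N2 a1 a2 + (∑ i ∈ Finset.Icc 1 N1, coefU N1 N2 a1 a2 i * x1 ^ i) +
      ∑ j ∈ Finset.Icc 1 N2, coefV N1 N2 a1 a2 j * x2 ^ j)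

open scoped Nat

section PowerSumRatio

variable {n : ℕ} {p w : ℕ → ℝ}

lemma mul_natCast_mul_pow_sub_one (x : ℝ) (k : ℕ) : x * (k * x ^ (k - 1)) = k * x ^ k := by
  rcases k with _ | k
  · simp
  · rw [Nat.add_sub_cancel, pow_succ]
    ring

lemma hasDerivAt_sum_mul_pow (c : ℕ → ℝ) (s : Finset ℕ) (x : ℝ) :
    HasDerivAt (fun y => ∑ k ∈ s, c k * y ^ k) (∑ k ∈ s, c k * (k * x ^ (k - 1))) x :=
  HasDerivAt.fun_sum fun k _ => (hasDerivAt_pow k x).const_mul (c k)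

lemma sub_mul_cross_sub_neg (hw : ∀ k ≤ n, 0 < w k)
    (hpw : StrictAntiOn (fun k => p k / w k) (Set.Iic n)) {j k : ℕ} (hj : j ≤ n) (hk : k ≤ n)
    (hjk : j ≠ k) : ((j : ℝ) - k) * (p j * w k - p k * w j) < 0 := by
  wlog hlt : j < k generalizing j k
  · have := this hk hj hjk.symm (by omega)
    linarith
  have hratio : p k / w k < p j / w j := hpw (Set.mem_Iic.2 hj) (Set.mem_Iic.2 hk) hlt
  rw [div_lt_div_iff₀ (hw k hk) (hw j hj)] at hratio
  exact mul_neg_of_neg_of_pos (sub_neg.2 (by exact_mod_cast hlt)) (by linarith)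

lemma sum_sum_sub_mul_mul_pow_neg (hn : 1 ≤ n) (hw : ∀ k ≤ n, 0 < w k)
    (hpw : StrictAntiOn (fun k => p k / w k) (Set.Iic n)) {x : ℝ} (hx : 0 < x) :
    ∑ j ∈ range (n + 1), ∑ k ∈ range (n + 1), ((j : ℝ) - k) * (p j * w k) * x ^ (j + k) < 0 := by
  set S := ∑ j ∈ range (n + 1), ∑ k ∈ range (n + 1), ((j : ℝ) - k) * (p j * w k) * x ^ (j + k)
    with hS
  have hswap : S = ∑ j ∈ range (n + 1), ∑ k ∈ range (n + 1),
      ((k : ℝ) - j) * (p k * w j) * x ^ (k + j) := sum_comm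
  have hsym : 2 * S = ∑ j ∈ range (n + 1), ∑ k ∈ range (n + 1),
      ((j : ℝ) - k) * (p j * w k - p k * w j) * x ^ (j + k) := by
    rw [two_mul]
    nth_rewrite 2 [hswap]
    rw [hS, ← sum_add_distrib]
    refine sum_congr rfl fun j _ => ?_
    rw [← sum_add_distrib]
    refine sum_congr rfl fun k _ => ?_
    rw [add_comm k j]
    ring
  have hterm : ∀ j ∈ range (n + 1), ∀ k ∈ range (n + 1), j ≠ k →
      ((j : ℝ) - k) * (p j * w k - p k * w j) * x ^ (j + k) < 0 := fun j hj k hk hjk =>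
    mul_neg_of_neg_of_pos (sub_mul_cross_sub_neg hw hpw (Nat.lt_succ_iff.1 (mem_range.1 hj))
      (Nat.lt_succ_iff.1 (mem_range.1 hk)) hjk) (pow_pos hx _)
  have hterm_nonpos : ∀ j ∈ range (n + 1), ∀ k ∈ range (n + 1),
      ((j : ℝ) - k) * (p j * w k - p k * w j) * x ^ (j + k) ≤ 0 := by
    intro j hj k hk
    by_cases hjk : j = k
    · simp [hjk]
    · exact (hterm j hj k hk hjk).le
  have h0 : 0 ∈ range (n + 1) := by simp
  have h1 : 1 ∈ range (n + 1) := by simp; omega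
  have : 2 * S < 0 := by
    rw [hsym]
    exact sum_neg' (fun j hj => sum_nonpos (hterm_nonpos j hj))
      ⟨0, h0, sum_neg' (hterm_nonpos 0 h0) ⟨1, h1, hterm 0 h0 1 h1 zero_ne_one⟩⟩
  linarith

theorem deriv_div_sum_mul_pow_neg (hn : 1 ≤ n) (hw : ∀ k ≤ n, 0 < w k)
    (hpw : StrictAntiOn (fun k => p k / w k) (Set.Iic n)) {x : ℝ} (hx : 0 < x) :
    deriv (fun y => (∑ k ∈ range (n + 1), p k * y ^ k) / ∑ k ∈ range (n + 1), w k * y ^ k) x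
      < 0 := by
  have hQ : 0 < ∑ k ∈ range (n + 1), w k * x ^ k :=
    sum_pos (fun k hk => mul_pos (hw k (Nat.lt_succ_iff.1 (mem_range.1 hk))) (pow_pos hx k))
      nonempty_range_add_one
  rw [((hasDerivAt_sum_mul_pow p _ x).fun_div (hasDerivAt_sum_mul_pow w _ x) hQ.ne').deriv]
  refine div_neg_of_neg_of_pos ?_ (pow_pos hQ 2)
  have hxD : ∀ c : ℕ → ℝ, x * ∑ k ∈ range (n + 1), c k * (k * x ^ (k - 1)) =
      ∑ k ∈ range (n + 1), c k * (k * x ^ k) := fun c => by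
    rw [mul_sum]
    exact sum_congr rfl fun k _ => by rw [mul_left_comm, mul_natCast_mul_pow_sub_one]
  refine neg_of_mul_neg_right ?_ hx.le
  calc x * ((∑ k ∈ range (n + 1), p k * (k * x ^ (k - 1))) * ∑ k ∈ range (n + 1), w k * x ^ k -
          (∑ k ∈ range (n + 1), p k * x ^ k) * ∑ k ∈ range (n + 1), w k * (k * x ^ (k - 1)))
      = (x * ∑ k ∈ range (n + 1), p k * (k * x ^ (k - 1))) * ∑ k ∈ range (n + 1), w k * x ^ k -
          (∑ k ∈ range (n + 1), p k * x ^ k) * (x * ∑ k ∈ range (n + 1), w k * (k * x ^ (k - 1)))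
        := by ring
    _ = ∑ j ∈ range (n + 1), ∑ k ∈ range (n + 1), ((j : ℝ) - k) * (p j * w k) * x ^ (j + k) := by
        rw [hxD, hxD, sum_mul_sum, sum_mul_sum, ← sum_sub_distrib]
        refine sum_congr rfl fun j _ => ?_
        rw [← sum_sub_distrib]
        exact sum_congr rfl fun k _ => by rw [pow_add]; ring
    _ < 0 := sum_sum_sub_mul_mul_pow_neg hn hw hpw hx

end PowerSumRatio

lemma sum_range_succ_eq_add_sum_Icc {M : Type*} [AddCommMonoid M] (f : ℕ → M) (n : ℕ) :
    ∑ k ∈ range (n + 1), f k = f 0 + ∑ k ∈ Icc 1 n, f k := by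
  rw [sum_range_eq_add_Ico f (by omega : 0 < n + 1), Ico_add_one_right_eq_Icc]

lemma sum_range_ite_zero_mul_pow (n : ℕ) (a y : ℝ) (c : ℕ → ℝ) :
    ∑ k ∈ range (n + 1), (if k = 0 then a else c k) * y ^ k = a + ∑ k ∈ Icc 1 n, c k * y ^ k := by
  rw [sum_range_succ_eq_add_sum_Icc]
  congr 1
  · simp
  · exact sum_congr rfl fun k hk => by rw [if_neg (by simp at hk; omega)]

lemma mul_sum_range_pow_div_factorial_le {a : ℝ} (ha : 0 ≤ a) (n : ℕ) :
    a * ∑ m ∈ range n, a ^ m / (m ! : ℝ) ≤ n * ∑ m ∈ range (n + 1), a ^ m / (m ! : ℝ) := by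
  calc a * ∑ m ∈ range n, a ^ m / (m ! : ℝ)
      = ∑ m ∈ range n, ((m : ℝ) + 1) * (a ^ (m + 1) / ((m + 1)! : ℝ)) := by
        rw [mul_sum]
        refine sum_congr rfl fun m _ => ?_
        rw [Nat.factorial_succ]
        push_cast
        field_simp
        ring
    _ ≤ ∑ m ∈ range n, (n : ℝ) * (a ^ (m + 1) / ((m + 1)! : ℝ)) :=
        sum_le_sum fun m hm => mul_le_mul_of_nonneg_right
          (by exact_mod_cast Nat.succ_le_of_lt (mem_range.1 hm)) (by positivity)
    _ ≤ n * ∑ m ∈ range (n + 1), a ^ m / (m ! : ℝ) := by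
        rw [← mul_sum, sum_range_succ' _ n]
        gcongr
        simp

section ProbabilisticSharing

variable {N1 N2 : ℕ} {a1 a2 x1 : ℝ}

noncomputable def psB1NumCoeff (N1 N2 : ℕ) (a1 a2 x1 : ℝ) (k : ℕ) : ℝ :=
  if k = 0 then coefM1 N1 N2 a1 a2 + ∑ i ∈ Icc 1 N1, coefU1 N1 N2 a1 a2 i * x1 ^ i
  else coefV1 N1 N2 a1 a2 k

noncomputable def psB1DenCoeff (N1 N2 : ℕ) (a1 a2 x1 : ℝ) (k : ℕ) : ℝ :=
  if k = 0 then coefD N1 N2 a1 a2 + ∑ i ∈ Icc 1 N1, coefU N1 N2 a1 a2 i * x1 ^ i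
  else coefV N1 N2 a1 a2 k

lemma psB1_eq_div_sum (N1 N2 : ℕ) (a1 a2 x1 y : ℝ) :
    psB1 N1 N2 a1 a2 x1 y = (∑ k ∈ range (N2 + 1), psB1NumCoeff N1 N2 a1 a2 x1 k * y ^ k) /
      ∑ k ∈ range (N2 + 1), psB1DenCoeff N1 N2 a1 a2 x1 k * y ^ k := by
  simp only [psB1, psB1NumCoeff, psB1DenCoeff, sum_range_ite_zero_mul_pow]

lemma coefV_pos (ha1 : 0 < a1) (ha2 : 0 < a2) (j : ℕ) : 0 < coefV N1 N2 a1 a2 j := by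
  unfold coefV
  positivity

lemma coefV1_eq (N1 N2 : ℕ) (a1 a2 : ℝ) (j : ℕ) :
    coefV1 N1 N2 a1 a2 j = (1 - ((N1 : ℝ) + j) / a1) * coefV N1 N2 a1 a2 j := by
  unfold coefV1 coefV
  ring

lemma psB1DenCoeff_pos (ha1 : 0 < a1) (ha2 : 0 < a2) (hx1 : 0 ≤ x1) (k : ℕ) :
    0 < psB1DenCoeff N1 N2 a1 a2 x1 k := by
  unfold psB1DenCoeff
  split_ifs
  · refine add_pos_of_pos_of_nonneg (by unfold coefD; positivity) (sum_nonneg fun i _ => ?_)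
    have : 0 ≤ coefU N1 N2 a1 a2 i := by unfold coefU; positivity
    positivity
  · exact coefV_pos ha1 ha2 k

lemma psB1NumCoeff_div_psB1DenCoeff (ha1 : 0 < a1) (ha2 : 0 < a2) {k : ℕ} (hk : k ≠ 0) :
    psB1NumCoeff N1 N2 a1 a2 x1 k / psB1DenCoeff N1 N2 a1 a2 x1 k = 1 - ((N1 : ℝ) + k) / a1 := by
  simp only [psB1NumCoeff, psB1DenCoeff, if_neg hk, coefV1_eq]
  exact mul_div_cancel_right₀ _ (coefV_pos ha1 ha2 k).ne'

lemma mul_coefD_sub_coefM1_le (ha1 : 0 < a1) (ha2 : 0 < a2) :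
    a1 * (coefD N1 N2 a1 a2 - coefM1 N1 N2 a1 a2) ≤ N1 * coefD N1 N2 a1 a2 := by
  have hsplit : coefD N1 N2 a1 a2 - coefM1 N1 N2 a1 a2 =
      (∑ m ∈ range N1, a1 ^ m / (m ! : ℝ)) * ∑ j ∈ range (N2 + 1), a2 ^ j / (j ! : ℝ) := by
    unfold coefD coefM1
    rw [sum_range_succ]
    ring
  rw [hsplit, ← mul_assoc, coefD, ← mul_assoc]
  exact mul_le_mul_of_nonneg_right (mul_sum_range_pow_div_factorial_le ha1.le N1) (by positivity)

lemma mul_coefU_sub_coefU1_le (ha1 : 0 < a1) (ha2 : 0 < a2) (i : ℕ) :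
    a1 * (coefU N1 N2 a1 a2 i - coefU1 N1 N2 a1 a2 i) ≤ N1 * coefU N1 N2 a1 a2 i := by
  have hsplit : coefU N1 N2 a1 a2 i - coefU1 N1 N2 a1 a2 i =
      a2 ^ (N2 + i) / ((N2 + i)! : ℝ) * ∑ m ∈ range (N1 - i), a1 ^ m / (m ! : ℝ) := by
    unfold coefU coefU1
    rw [sum_range_succ]
    ring
  have hsum := mul_sum_range_pow_div_factorial_le ha1.le (N1 - i)
  have hcast : ((N1 - i : ℕ) : ℝ) ≤ N1 := by exact_mod_cast N1.sub_le i
  rw [hsplit, coefU, mul_left_comm, mul_left_comm (N1 : ℝ)]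
  refine mul_le_mul_of_nonneg_left (hsum.trans ?_) (by positivity)
  exact mul_le_mul_of_nonneg_right hcast (by positivity)

lemma mul_psB1DenCoeff_sub_psB1NumCoeff_zero_le (ha1 : 0 < a1) (ha2 : 0 < a2) (hx1 : 0 ≤ x1) :
    a1 * (psB1DenCoeff N1 N2 a1 a2 x1 0 - psB1NumCoeff N1 N2 a1 a2 x1 0) ≤
      N1 * psB1DenCoeff N1 N2 a1 a2 x1 0 := by
  simp only [psB1DenCoeff, psB1NumCoeff]
  calc a1 * (coefD N1 N2 a1 a2 + ∑ i ∈ Icc 1 N1, coefU N1 N2 a1 a2 i * x1 ^ i -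
        (coefM1 N1 N2 a1 a2 + ∑ i ∈ Icc 1 N1, coefU1 N1 N2 a1 a2 i * x1 ^ i))
      = a1 * (coefD N1 N2 a1 a2 - coefM1 N1 N2 a1 a2) +
          ∑ i ∈ Icc 1 N1, a1 * (coefU N1 N2 a1 a2 i - coefU1 N1 N2 a1 a2 i) * x1 ^ i := by
        rw [add_sub_add_comm, ← sum_sub_distrib, mul_add, mul_sum]
        exact congrArg _ (sum_congr rfl fun i _ => by ring)
    _ ≤ N1 * coefD N1 N2 a1 a2 + ∑ i ∈ Icc 1 N1, N1 * coefU N1 N2 a1 a2 i * x1 ^ i := by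
        refine add_le_add (mul_coefD_sub_coefM1_le ha1 ha2) (sum_le_sum fun i _ => ?_)
        exact mul_le_mul_of_nonneg_right (mul_coefU_sub_coefU1_le ha1 ha2 i) (pow_nonneg hx1 i)
    _ = N1 * (coefD N1 N2 a1 a2 + ∑ i ∈ Icc 1 N1, coefU N1 N2 a1 a2 i * x1 ^ i) := by
        rw [mul_add, mul_sum]
        exact congrArg _ (sum_congr rfl fun i _ => by ring)

lemma strictAnti_psB1NumCoeff_div_psB1DenCoeff (ha1 : 0 < a1) (ha2 : 0 < a2) (hx1 : 0 ≤ x1) :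
    StrictAnti fun k => psB1NumCoeff N1 N2 a1 a2 x1 k / psB1DenCoeff N1 N2 a1 a2 x1 k := by
  refine strictAnti_nat_of_succ_lt fun k => ?_
  rw [psB1NumCoeff_div_psB1DenCoeff ha1 ha2 k.succ_ne_zero]
  rcases k with _ | k
  · set d := psB1DenCoeff N1 N2 a1 a2 x1 0
    set q := psB1NumCoeff N1 N2 a1 a2 x1 0
    have hd : 0 < d := psB1DenCoeff_pos ha1 ha2 hx1 0
    have hle : a1 * (d - q) ≤ N1 * d := mul_psB1DenCoeff_sub_psB1NumCoeff_zero_le ha1 ha2 hx1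
    calc 1 - ((N1 : ℝ) + (0 + 1 : ℕ)) / a1 < 1 - N1 / a1 := by
          gcongr
          push_cast
          linarith
      _ ≤ 1 - (d - q) / d := by
          rw [sub_le_sub_iff_left, div_le_div_iff₀ hd ha1]
          linarith
      _ = q / d := by
          field_simp
          ring
  · rw [psB1NumCoeff_div_psB1DenCoeff ha1 ha2 k.succ_ne_zero]
    gcongr
    linarith

end ProbabilisticSharing

theorem psB1_strict_anti_in_x2_general (N1 N2 : ℕ) (a1 a2 : ℝ)
    (hN2 : 1 ≤ N2) (ha1 : 0 < a1) (ha2 : 0 < a2)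
    (x1 x2 : ℝ) (hx1 : x1 ∈ Set.Icc (0 : ℝ) 1) (hx2 : x2 ∈ Set.Ioo (0 : ℝ) 1) :
    deriv (fun y => psB1 N1 N2 a1 a2 x1 y) x2 < 0 := by
  simp only [psB1_eq_div_sum]
  exact deriv_div_sum_mul_pow_neg hN2 (fun k _ => psB1DenCoeff_pos ha1 ha2 hx1.1 k)
    ((strictAnti_psB1NumCoeff_div_psB1DenCoeff ha1 ha2 hx1.1).strictAntiOn _) hx2.1

theorem psB1_strict_anti_in_x2 (N1 N2 : ℕ) (a1 a2 : ℝ)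
    (hN1 : 1 ≤ N1) (hN2 : 1 ≤ N2) (ha1 : 0 < a1) (ha2 : 0 < a2)
    (x1 x2 : ℝ) (hx1 : x1 ∈ Set.Icc (0 : ℝ) 1) (hx2 : x2 ∈ Set.Ioo (0 : ℝ) 1) :
    deriv (fun y => psB1 N1 N2 a1 a2 x1 y) x2 < 0 :=
  psB1_strict_anti_in_x2_general N1 N2 a1 a2 hN2 ha1 ha2 x1 x2 hx1 hx2
end

section
/- Under the probabilistic sharing model, the blocking probability B1(x1,x2) of provider 1 is strictly increasing in x1 on (0,1): its partial derivative with respect to x1 is strictly positive. -/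
open Finset

/-!
The derivative in `x1` has the sign of `P'Q - PQ'`, where `P = c + ∑ aᵢ x1ⁱ` and
`Q = d + ∑ bᵢ x1ⁱ` are numerator and denominator with the `x2`-terms absorbed into `c` and `d`.
Multiplied by `x1` it equals `∑ᵢ i x1ⁱ (aᵢ d - bᵢ c)` plus `∑_{i,k} (i - k) aᵢ bₖ x1^(i+k)`; the
latter is nonnegative as soon as `aᵢ / bᵢ` is nondecreasing in `i`. Every coefficient inequality
needed reduces to two facts on the Erlang B formula `B(n, a) = (aⁿ / n!) / ∑_{j ≤ n} aʲ / j!`: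
it is strictly decreasing in `n`, and the carried traffic `a (1 - B(n, a))` is at most `n`.
-/

noncomputable def expPartialSum (a : ℝ) (n : ℕ) : ℝ :=
  ∑ j ∈ range (n + 1), a ^ j / (j.factorial : ℝ)

noncomputable def erlangB (a : ℝ) (n : ℕ) : ℝ :=
  a ^ n / (n.factorial : ℝ) / expPartialSum a n

lemma expPartialSum_succ (a : ℝ) (n : ℕ) :
    expPartialSum a (n + 1) = expPartialSum a n + a ^ (n + 1) / ((n + 1).factorial : ℝ) :=
  sum_range_succ _ _

lemma pow_succ_div_factorial_succ (a : ℝ) (n : ℕ) :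
    a ^ (n + 1) / ((n + 1).factorial : ℝ) = a * (a ^ n / (n.factorial : ℝ)) / (n + 1) := by
  rw [Nat.factorial_succ]; push_cast; field_simp; ring

section Erlang

variable {a : ℝ}

lemma expPartialSum_pos (ha : 0 < a) (n : ℕ) : 0 < expPartialSum a n := by
  unfold expPartialSum; positivity

lemma mul_expPartialSum_le (ha : 0 ≤ a) (n : ℕ) :
    a * expPartialSum a n ≤ a * (a ^ n / (n.factorial : ℝ)) + n * expPartialSum a n := by
  induction n with
  | zero => simp [expPartialSum]
  | succ n ih =>
    have hE : 0 ≤ expPartialSum a n := by unfold expPartialSum; positivity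
    rw [expPartialSum_succ, pow_succ_div_factorial_succ]
    have hcancel : ((n : ℝ) + 1) * (a * (a ^ n / (n.factorial : ℝ)) / (n + 1))
        = a * (a ^ n / (n.factorial : ℝ)) := by field_simp
    push_cast
    linarith

lemma erlangB_succ_lt (ha : 0 < a) (n : ℕ) : erlangB a (n + 1) < erlangB a n := by
  have hE := expPartialSum_pos ha n
  have hcarried := mul_expPartialSum_le ha.le n
  have ht : 0 < a ^ n / (n.factorial : ℝ) := by positivity
  unfold erlangB
  rw [div_lt_div_iff₀ (expPartialSum_pos ha _) hE, expPartialSum_succ,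
    pow_succ_div_factorial_succ, ← sub_pos]
  set t := a ^ n / (n.factorial : ℝ)
  have hfactor :
      t * (expPartialSum a n + a * t / (n + 1)) - a * t / (n + 1) * expPartialSum a n
        = t * ((n + 1) * expPartialSum a n + a * t - a * expPartialSum a n) / (n + 1) := by
    field_simp
  rw [hfactor]
  exact div_pos (mul_pos ht (by linarith)) (by positivity)

lemma erlangB_strictAnti (ha : 0 < a) : StrictAnti (erlangB a) :=
  strictAnti_nat_of_succ_lt (erlangB_succ_lt ha)

lemma pow_div_factorial_mul_expPartialSum_lt (ha : 0 < a) {p q : ℕ} (h : p < q) :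
    a ^ q / (q.factorial : ℝ) * expPartialSum a p
      < a ^ p / (p.factorial : ℝ) * expPartialSum a q := by
  have := erlangB_strictAnti ha h
  rwa [erlangB, erlangB, div_lt_div_iff₀ (expPartialSum_pos ha _) (expPartialSum_pos ha _)]
    at this

lemma pow_div_factorial_mul_expPartialSum_le (ha : 0 < a) {p q : ℕ} (h : p ≤ q) :
    a ^ q / (q.factorial : ℝ) * expPartialSum a p
      ≤ a ^ p / (p.factorial : ℝ) * expPartialSum a q := by
  have := (erlangB_strictAnti ha).antitone h
  rwa [erlangB, erlangB, div_le_div_iff₀ (expPartialSum_pos ha _) (expPartialSum_pos ha _)]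
    at this

lemma one_sub_div_mul_expPartialSum_le (ha : 0 < a) {n : ℕ} {M : ℝ} (hM : n ≤ M) :
    (1 - M / a) * expPartialSum a n ≤ a ^ n / (n.factorial : ℝ) := by
  have hcarried := mul_expPartialSum_le ha.le n
  have hE := expPartialSum_pos ha n
  rw [← mul_le_mul_iff_right₀ ha]
  have hexpand : a * ((1 - M / a) * expPartialSum a n)
      = a * expPartialSum a n - M * expPartialSum a n := by
    field_simp
  rw [hexpand]
  linarith [mul_le_mul_of_nonneg_right hM hE.le]

end Erlang

lemma sum_mul_sum_natCast_mul_le (s : Finset ℕ) (A B : ℕ → ℝ)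
    (h : ∀ i ∈ s, ∀ k ∈ s, k ≤ i → A k * B i ≤ A i * B k) :
    (∑ i ∈ s, A i) * ∑ i ∈ s, (i : ℝ) * B i ≤ (∑ i ∈ s, (i : ℝ) * A i) * ∑ i ∈ s, B i := by
  have hpair : ∀ i ∈ s, ∀ k ∈ s, 0 ≤ ((i : ℝ) - k) * (A i * B k - A k * B i) := by
    intro i hi k hk
    rcases le_total k i with hki | hik
    · exact mul_nonneg (sub_nonneg.2 (by exact_mod_cast hki)) (sub_nonneg.2 (h i hi k hk hki))
    · exact mul_nonneg_of_nonpos_of_nonpos (sub_nonpos.2 (by exact_mod_cast hik))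
        (sub_nonpos.2 (h k hk i hi hik))
  have hcross :
      (∑ i ∈ s, (i : ℝ) * A i) * ∑ i ∈ s, B i - (∑ i ∈ s, A i) * ∑ i ∈ s, (i : ℝ) * B i
        = ∑ i ∈ s, ∑ k ∈ s, ((i : ℝ) - k) * (A i * B k) := by
    simp only [sum_mul_sum, ← sum_sub_distrib]
    exact sum_congr rfl fun i _ => sum_congr rfl fun k _ => by ring
  have hswap : ∑ i ∈ s, ∑ k ∈ s, ((i : ℝ) - k) * (A k * B i)
      = -∑ i ∈ s, ∑ k ∈ s, ((i : ℝ) - k) * (A i * B k) := by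
    rw [sum_comm, ← sum_neg_distrib]
    exact sum_congr rfl fun i _ => by
      rw [← sum_neg_distrib]; exact sum_congr rfl fun k _ => by ring
  have hsum := sum_nonneg fun i hi => sum_nonneg (hpair i hi)
  simp only [mul_sub, sum_sub_distrib, hswap] at hsum
  linarith

lemma hasDerivAt_const_add_sum_mul_pow (c : ℝ) (a : ℕ → ℝ) (s : Finset ℕ) (x : ℝ) :
    HasDerivAt (fun y => c + ∑ i ∈ s, a i * y ^ i) (∑ i ∈ s, a i * (i * x ^ (i - 1))) x :=
  (HasDerivAt.fun_sum fun i _ => (hasDerivAt_pow i x).const_mul (a i)).const_add c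

lemma mul_sum_mul_natCast_mul_pow_pred (s : Finset ℕ) (a : ℕ → ℝ) (x : ℝ) :
    x * ∑ i ∈ s, a i * (i * x ^ (i - 1)) = ∑ i ∈ s, (i : ℝ) * (a i * x ^ i) := by
  rw [mul_sum]
  refine sum_congr rfl fun i _ => ?_
  cases i with
  | zero => simp
  | succ i => simp only [Nat.add_sub_cancel, pow_succ]; push_cast; ring

theorem deriv_div_const_add_sum_mul_pow_pos (s : Finset ℕ) {a b : ℕ → ℝ} {c d x : ℝ}
    (hx : 0 < x) (hs : s.Nonempty) (hs0 : 0 ∉ s) (hQ : 0 < d + ∑ i ∈ s, b i * x ^ i)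
    (hlead : ∀ i ∈ s, b i * c < a i * d)
    (hratio : ∀ i ∈ s, ∀ k ∈ s, k ≤ i → a k * b i ≤ a i * b k) :
    0 < deriv (fun y => (c + ∑ i ∈ s, a i * y ^ i) / (d + ∑ i ∈ s, b i * y ^ i)) x := by
  rw [((hasDerivAt_const_add_sum_mul_pow c a s x).fun_div
    (hasDerivAt_const_add_sum_mul_pow d b s x) hQ.ne').deriv]
  refine div_pos (pos_of_mul_pos_right ?_ hx.le) (pow_pos hQ 2)
  have hlead_sum : 0 < ∑ i ∈ s, (i : ℝ) * x ^ i * (a i * d - b i * c) := by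
    refine sum_pos (fun i hi => mul_pos (mul_pos ?_ (pow_pos hx i)) (sub_pos.2 (hlead i hi))) hs
    exact Nat.cast_pos.2 (Nat.pos_of_ne_zero (ne_of_mem_of_not_mem hi hs0))
  have hlead_sum_eq : ∑ i ∈ s, (i : ℝ) * x ^ i * (a i * d - b i * c)
      = (∑ i ∈ s, (i : ℝ) * (a i * x ^ i)) * d - c * ∑ i ∈ s, (i : ℝ) * (b i * x ^ i) := by
    rw [sum_mul, mul_sum, ← sum_sub_distrib]
    exact sum_congr rfl fun i _ => by ring
  have hcheb := sum_mul_sum_natCast_mul_le s (fun i => a i * x ^ i) (fun i => b i * x ^ i)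
    fun i hi k hk hki => by
      have := mul_le_mul_of_nonneg_right (hratio i hi k hk hki) (pow_nonneg hx.le (k + i))
      rw [pow_add] at this
      linarith
  have heuler : x * ((∑ i ∈ s, a i * (i * x ^ (i - 1))) * (d + ∑ i ∈ s, b i * x ^ i)
        - (c + ∑ i ∈ s, a i * x ^ i) * ∑ i ∈ s, b i * (i * x ^ (i - 1)))
      = (∑ i ∈ s, (i : ℝ) * (a i * x ^ i)) * (d + ∑ i ∈ s, b i * x ^ i)
        - (c + ∑ i ∈ s, a i * x ^ i) * ∑ i ∈ s, (i : ℝ) * (b i * x ^ i) := by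
    rw [← mul_sum_mul_natCast_mul_pow_pred, ← mul_sum_mul_natCast_mul_pow_pred]
    ring
  rw [heuler]
  linarith

section Coefficients

variable {N1 N2 : ℕ} {a1 a2 : ℝ}

lemma coefD_pos (ha1 : 0 < a1) (ha2 : 0 < a2) : 0 < coefD N1 N2 a1 a2 :=
  mul_pos (expPartialSum_pos ha1 N1) (expPartialSum_pos ha2 N2)

lemma coefU_nonneg (ha1 : 0 ≤ a1) (ha2 : 0 ≤ a2) (i : ℕ) : 0 ≤ coefU N1 N2 a1 a2 i := by
  unfold coefU; positivity

lemma coefV_nonneg (ha1 : 0 ≤ a1) (ha2 : 0 ≤ a2) (j : ℕ) : 0 ≤ coefV N1 N2 a1 a2 j := by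
  unfold coefV; positivity

lemma coefU_mul_coefM1_lt (ha1 : 0 < a1) (ha2 : 0 < a2) {i : ℕ} (hi1 : 1 ≤ i) (hi : i ≤ N1) :
    coefU N1 N2 a1 a2 i * coefM1 N1 N2 a1 a2 < coefU1 N1 N2 a1 a2 i * coefD N1 N2 a1 a2 := by
  have hP : 0 < a2 ^ (N2 + i) / ((N2 + i).factorial : ℝ) * expPartialSum a2 N2 :=
    mul_pos (by positivity) (expPartialSum_pos ha2 N2)
  have h := mul_lt_mul_of_pos_left
    (pow_div_factorial_mul_expPartialSum_lt ha1 (show N1 - i < N1 by omega)) hP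
  unfold expPartialSum at h
  unfold coefU coefM1 coefU1 coefD
  linarith

lemma coefU1_mul_coefU_le (ha1 : 0 < a1) (ha2 : 0 ≤ a2) {i k : ℕ} (hki : k ≤ i) (hi : i ≤ N1) :
    coefU1 N1 N2 a1 a2 k * coefU N1 N2 a1 a2 i
      ≤ coefU1 N1 N2 a1 a2 i * coefU N1 N2 a1 a2 k := by
  have hP : 0 ≤ a2 ^ (N2 + k) / ((N2 + k).factorial : ℝ) *
      (a2 ^ (N2 + i) / ((N2 + i).factorial : ℝ)) := by positivity
  have h := mul_le_mul_of_nonneg_left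
    (pow_div_factorial_mul_expPartialSum_le ha1 (show N1 - i ≤ N1 - k by omega)) hP
  unfold expPartialSum at h
  unfold coefU1 coefU
  linarith

lemma coefU_mul_coefV1_le (ha1 : 0 < a1) (ha2 : 0 ≤ a2) (i j : ℕ) :
    coefU N1 N2 a1 a2 i * coefV1 N1 N2 a1 a2 j
      ≤ coefU1 N1 N2 a1 a2 i * coefV N1 N2 a1 a2 j := by
  have hP : 0 ≤ a2 ^ (N2 + i) / ((N2 + i).factorial : ℝ) *
      (a1 ^ (N1 + j) / ((N1 + j).factorial : ℝ) * expPartialSum a2 (N2 - j)) := by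
    unfold expPartialSum; positivity
  have hM : ((N1 - i : ℕ) : ℝ) ≤ N1 + j := by
    have : ((N1 - i : ℕ) : ℝ) ≤ N1 := by exact_mod_cast Nat.sub_le N1 i
    linarith [(Nat.cast_nonneg j : (0 : ℝ) ≤ j)]
  have h := mul_le_mul_of_nonneg_left (one_sub_div_mul_expPartialSum_le ha1 hM) hP
  unfold expPartialSum at h
  unfold coefU coefV1 coefU1 coefV
  linarith

lemma coefU_mul_sum_coefV1_le (ha1 : 0 < a1) (ha2 : 0 ≤ a2) {x2 : ℝ} (hx2 : 0 ≤ x2)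
    (s : Finset ℕ) (i : ℕ) :
    coefU N1 N2 a1 a2 i * ∑ j ∈ s, coefV1 N1 N2 a1 a2 j * x2 ^ j
      ≤ coefU1 N1 N2 a1 a2 i * ∑ j ∈ s, coefV N1 N2 a1 a2 j * x2 ^ j := by
  rw [mul_sum, mul_sum]
  refine sum_le_sum fun j _ => ?_
  rw [← mul_assoc, ← mul_assoc]
  exact mul_le_mul_of_nonneg_right (coefU_mul_coefV1_le ha1 ha2 i j) (pow_nonneg hx2 j)

end Coefficients

theorem psB1_strict_mono_in_x1_general (N1 N2 : ℕ) (a1 a2 : ℝ)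
    (hN1 : 1 ≤ N1) (ha1 : 0 < a1) (ha2 : 0 < a2)
    (x1 x2 : ℝ) (hx1 : x1 ∈ Set.Ioo (0 : ℝ) 1) (hx2 : x2 ∈ Set.Icc (0 : ℝ) 1) :
    0 < deriv (fun y => psB1 N1 N2 a1 a2 y x2) x1 := by
  obtain ⟨hx1, -⟩ := hx1
  obtain ⟨hx2, -⟩ := hx2
  have hfun : (fun y => psB1 N1 N2 a1 a2 y x2) = fun y =>
      (coefM1 N1 N2 a1 a2 + ∑ j ∈ Icc 1 N2, coefV1 N1 N2 a1 a2 j * x2 ^ j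
          + ∑ i ∈ Icc 1 N1, coefU1 N1 N2 a1 a2 i * y ^ i) /
        (coefD N1 N2 a1 a2 + ∑ j ∈ Icc 1 N2, coefV N1 N2 a1 a2 j * x2 ^ j
          + ∑ i ∈ Icc 1 N1, coefU N1 N2 a1 a2 i * y ^ i) := by
    funext y; unfold psB1; ring
  rw [hfun]
  apply deriv_div_const_add_sum_mul_pow_pos _ hx1 (nonempty_Icc.2 hN1) (by simp)
  · refine add_pos_of_pos_of_nonneg (add_pos_of_pos_of_nonneg (coefD_pos ha1 ha2)
      (sum_nonneg fun j _ => ?_)) (sum_nonneg fun i _ => ?_)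
    · exact mul_nonneg (coefV_nonneg ha1.le ha2.le j) (pow_nonneg hx2 j)
    · exact mul_nonneg (coefU_nonneg ha1.le ha2.le i) (pow_nonneg hx1.le i)
  · intro i hi
    rw [mul_add, mul_add]
    exact add_lt_add_of_lt_of_le (coefU_mul_coefM1_lt ha1 ha2 (mem_Icc.1 hi).1 (mem_Icc.1 hi).2)
      (coefU_mul_sum_coefV1_le ha1 ha2.le hx2 _ i)
  · intro i hi k _ hki
    exact coefU1_mul_coefU_le ha1 ha2.le hki (mem_Icc.1 hi).2

theorem psB1_strict_mono_in_x1 (N1 N2 : ℕ) (a1 a2 : ℝ)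
    (hN1 : 1 ≤ N1) (hN2 : 1 ≤ N2) (ha1 : 0 < a1) (ha2 : 0 < a2)
    (x1 x2 : ℝ) (hx1 : x1 ∈ Set.Ioo (0 : ℝ) 1) (hx2 : x2 ∈ Set.Icc (0 : ℝ) 1) :
    0 < deriv (fun y => psB1 N1 N2 a1 a2 y x2) x1 :=
  psB1_strict_mono_in_x1_general N1 N2 a1 a2 hN1 ha1 ha2 x1 x2 hx1 hx2
end
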